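/- (JS → cross entropy as π₁ → 0) For a fixed probability vector p on K classes with p_y > 0, lim_{π₁→0⁺} D_JS_π(e_y, p) / h(1−π₁) = −log p_y, where D_JS_π(e_y, p) = H(π₁e_y + (1−π₁)p) − π₁H(e_y) − (1−π₁)H(p) and h(x) = −x log x. -/

import Mathlib

open Real Finset Filter

/-- Shannon entropy of a finite probability vector (convention `0 * log 0 = 0`). -/
noncomputable def shannonH {K : ℕ} (p : Fin K → ℝ) : ℝ := ∑ k, -(p k * Real.log (p k))

/-- One-hot probability vector at class `c`. -/
noncomputable def onehot {K : ℕ} (c : Fin K) : Fin K → ℝ := fun k => if k = c then 1 else 0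

/-!
Write `h = negMulLog`. Since `h (x * y) = y * h x + x * h y`, every coordinate `k ≠ y` of the
mixture `π₁ e_y + (1 - π₁) p` contributes `(1 - π₁) h (p k) + p k * h (1 - π₁)`, so the
numerator equals `(1 - p y) h (1 - π₁) + N π₁` with `N π₁ = h (π₁ + (1 - π₁) p y) - (1 - π₁) h (p y)`
for every `π₁`. Numerator and denominator vanish at `π₁ = 0` with derivatives `-log (p y)` and `1`,
so their ratio tends to `-log (p y)`.
-/

open Topology

theorem tendsto_div_nhdsNE_of_hasDerivAt {𝕜 : Type*} [NontriviallyNormedField 𝕜]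
    {f g : 𝕜 → 𝕜} {f' g' x : 𝕜} (hf : HasDerivAt f f' x) (hg : HasDerivAt g g' x)
    (hfx : f x = 0) (hgx : g x = 0) (hg' : g' ≠ 0) :
    Tendsto (fun t => f t / g t) (𝓝[≠] x) (𝓝 (f' / g')) := by
  refine (hf.tendsto_slope.div hg.tendsto_slope hg').congr' ?_
  filter_upwards [self_mem_nhdsWithin] with t (ht : t ≠ x)
  rw [Pi.div_apply, slope_def_field, slope_def_field, hfx, hgx, sub_zero, sub_zero,
    div_div_div_cancel_right₀ (sub_ne_zero.mpr ht)]

theorem shannonH_eq_sum_negMulLog {K : ℕ} (p : Fin K → ℝ) :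
    shannonH p = ∑ k, negMulLog (p k) := by
  simp only [shannonH, negMulLog, neg_mul]

theorem shannonH_onehot {K : ℕ} (c : Fin K) : shannonH (onehot c) = 0 := by
  refine sum_eq_zero fun k _ => ?_
  by_cases hk : k = c <;> simp [onehot, hk]

theorem shannonH_mix_onehot_sub {K : ℕ} (p : Fin K → ℝ) (hp1 : ∑ k, p k = 1) (y : Fin K)
    (a : ℝ) :
    shannonH (fun k => a * onehot y k + (1 - a) * p k) - a * shannonH (onehot y)
        - (1 - a) * shannonH p
      = (1 - p y) * negMulLog (1 - a)
        + (negMulLog (a + (1 - a) * p y) - (1 - a) * negMulLog (p y)) := by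
  have hterm : ∀ k, negMulLog (a * onehot y k + (1 - a) * p k) - (1 - a) * negMulLog (p k)
      = p k * negMulLog (1 - a) + if k = y then negMulLog (a + (1 - a) * p y)
          - (1 - a) * negMulLog (p y) - p y * negMulLog (1 - a) else 0 := by
    intro k
    by_cases hk : k = y
    · subst hk
      simp only [onehot, if_true, mul_one]
      ring
    · simp only [onehot, hk, if_false, mul_zero, zero_add, negMulLog_mul]
      ring
  rw [shannonH_onehot, mul_zero, sub_zero, shannonH_eq_sum_negMulLog,
    shannonH_eq_sum_negMulLog, mul_sum, ← sum_sub_distrib]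
  simp only [hterm, sum_add_distrib, ← sum_mul, hp1, sum_ite_eq', mem_univ, if_true]
  ring

theorem hasDerivAt_negMulLog_one_sub : HasDerivAt (fun a => negMulLog (1 - a)) 1 0 :=
  ((hasDerivAt_negMulLog one_ne_zero).comp_of_eq 0 ((hasDerivAt_id' (0 : ℝ)).const_sub 1)
    (sub_zero (1 : ℝ)).symm).congr_deriv (by simp)

theorem hasDerivAt_negMulLog_mix {c : ℝ} (hc : c ≠ 0) :
    HasDerivAt (fun a => negMulLog (a + (1 - a) * c) - (1 - a) * negMulLog c)
      (-log c - (1 - c)) 0 := by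
  have hmix : HasDerivAt (fun a : ℝ => a + (1 - a) * c) (1 - c) 0 :=
    ((hasDerivAt_id' (0 : ℝ)).add (((hasDerivAt_id' (0 : ℝ)).const_sub 1).mul_const c)).congr_deriv
      (by ring)
  refine (((hasDerivAt_negMulLog hc).comp_of_eq 0 hmix (by ring)).sub
    (((hasDerivAt_id' (0 : ℝ)).const_sub 1).mul_const (negMulLog c))).congr_deriv ?_
  rw [negMulLog]
  ring

theorem js_tendsto_ce_general {K : ℕ} (p : Fin K → ℝ)
    (hp1 : ∑ k, p k = 1)
    (y : Fin K) (hpy : 0 < p y) :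
    Tendsto (fun a : ℝ =>
        (shannonH (fun k => a * onehot y k + (1 - a) * p k)
          - a * shannonH (onehot y) - (1 - a) * shannonH p)
        / (-((1 - a) * Real.log (1 - a))))
      (nhdsWithin 0 (Set.Ioo (0:ℝ) 1)) (nhds (-Real.log (p y))) := by
  have hG := hasDerivAt_negMulLog_one_sub
  have hF := (hG.const_mul (1 - p y)).add (hasDerivAt_negMulLog_mix hpy.ne')
  have hratio := tendsto_div_nhdsNE_of_hasDerivAt hF hG (by simp) (by simp) one_ne_zero
  rw [mul_one, div_one, add_sub_cancel] at hratio
  refine (hratio.mono_left (nhdsWithin_mono _ fun a ha => ha.1.ne')).congr fun a => ?_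
  simp only [Pi.add_apply, shannonH_mix_onehot_sub p hp1, negMulLog, neg_mul]

theorem js_tendsto_ce {K : ℕ} (p : Fin K → ℝ)
    (hp : ∀ k, 0 ≤ p k) (hp1 : ∑ k, p k = 1)
    (y : Fin K) (hpy : 0 < p y) :
    Tendsto (fun a : ℝ =>
        (shannonH (fun k => a * onehot y k + (1 - a) * p k)
          - a * shannonH (onehot y) - (1 - a) * shannonH p)
        / (-((1 - a) * Real.log (1 - a))))
      (nhdsWithin 0 (Set.Ioo (0:ℝ) 1)) (nhds (-Real.log (p y))) :=
  js_tendsto_ce_general p hp1 y hpy
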